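/- Let C_6 = R·(b_1(x) + ug_1(x) + u²g_2(x)) + R·u²b_2(x) be a left ideal of Type 6 of R := R^{3,x^{p^s}−λ}_Θ, i.e. b_1(x), b_2(x) ∈ B_λ^1 of degree ≤ p^s−1, g_1(x), g_2(x) ∈ F_{p^m}[x,θ]/⟨(λ_{0,0}x−1)^{p^s}⟩ with deg g_1(x) < deg b_1(x) and deg g_2(x) < deg b_2(x), satisfying: whenever u²b(x) ∈ R·(b_1(x)+ug_1(x)+u²g_2(x)) for some b(x) ∈ F_{p^m}[x,θ]/⟨(λ_{0,0}x−1)^{p^s}⟩, then b_2(x) |_r b(x). Then Tor_2(C_6) = (F_{p^m}[x,θ]/⟨(λ_{0,0}x−1)^{p^s}⟩)·b_2(x). -/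
import Mathlib


open Polynomial

namespace SkewPaper

variable (p m t : ℕ) [Fact p.Prime]

/-- The finite field `F_{p^m}`. -/
abbrev Fq : Type := GaloisField p m

/-- The finite chain ring `R^t = F_{p^m}[u]/⟨u^t⟩`. -/
abbrev Rt : Type :=
  Polynomial (Fq p m) ⧸ Ideal.span {(Polynomial.X : Polynomial (Fq p m)) ^ t}

/-- The element `u` of `R^t`. -/
noncomputable def uE : Rt p m t := Ideal.Quotient.mk _ Polynomial.X

/-- The canonical embedding `F_{p^m} → R^t`. -/
noncomputable def eps : Fq p m →+* Rt p m t :=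
  (Ideal.Quotient.mk _).comp Polynomial.C

/-- The automorphism `Θ` of `R^t` extending `θ` with `Θ(u) = u`,
i.e. `Θ(a₀ + a₁u + ⋯ + a_{t-1}u^{t-1}) = θ(a₀) + θ(a₁)u + ⋯ + θ(a_{t-1})u^{t-1}`. -/
noncomputable def Th (theta : Fq p m ≃+* Fq p m) : Rt p m t ≃+* Rt p m t :=
  Ideal.quotientEquiv _ _ (Polynomial.mapEquiv theta) (by
    rw [Ideal.map_span, Set.image_singleton]
    simp [Polynomial.mapEquiv_apply])

/-- Reduction of `R^t` modulo `u`. -/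
noncomputable def rdc (ht : 0 < t) : Rt p m t →+* Fq p m :=
  Ideal.Quotient.lift _ (Polynomial.evalRingHom 0) (by
    intro a ha
    rw [Ideal.mem_span_singleton] at ha
    obtain ⟨b, rfl⟩ := ha
    simp [zero_pow ht.ne'])

/-- `a` right-divides `b`, i.e. `b = h * a` for some `h`. -/
def RDvd {A : Type*} [Mul A] (a b : A) : Prop := ∃ h, b = h * a

/-- The element `Σᵢ ι(cᵢ) X^i` determined by a coefficient family `c`. -/
noncomputable def spoly {R A : Type*} [Semiring R] [Semiring A] (iot : R →+* A) (X : A)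
    (c : ℕ →₀ R) : A :=
  c.sum fun i a => iot a * X ^ i

/-- Lift `Σᵢ ι(ε(cᵢ)) X^i` of a skew polynomial over `F_{p^m}` to the skew polynomial ring
over `R^t` (coefficient-wise, via the embedding `F_{p^m} → R^t`). -/
noncomputable def liftP {A : Type*} [Semiring A] (iot : Rt p m t →+* A) (X : A)
    (c : ℕ →₀ Fq p m) : A :=
  c.sum fun i a => iot (eps p m t a) * X ^ i

/-- `λ = λ₀ + uλ₁ + ⋯ + u^{t-1}λ_{t-1}` as an element of `R^t`. -/
noncomputable def lamOf (lc : ℕ → Fq p m) : Rt p m t :=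
  ∑ i ∈ Finset.range t, eps p m t (lc i) * uE p m t ^ i

/-- The order `|Θ|` of `Θ` in the automorphism group of `R^t`. -/
noncomputable def thOrder (theta : Fq p m ≃+* Fq p m) : ℕ :=
  orderOf (G := RingAut (Rt p m t)) (Th p m t theta)

/-- The order `|θ|` of `θ` in the automorphism group of `F_{p^m}`. -/
noncomputable def thetaOrder (theta : Fq p m ≃+* Fq p m) : ℕ :=
  orderOf (G := RingAut (Fq p m)) theta

/-- The central polynomial `f(x) = Σᵢ fᵢ x^{i·|Θ|}` in the skew polynomial ring. -/
noncomputable def fOf {A : Type*} [Ring A] (theta : Fq p m ≃+* Fq p m)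
    (iot : Rt p m t →+* A) (X : A) (fc : ℕ →₀ Rt p m t) : A :=
  fc.sum fun i a => iot a * X ^ (i * thOrder p m t theta)

/-- The image of `u` in the quotient `R^{t,f}_Θ`. -/
noncomputable def uQ {P Q : Type*} [Semiring P] [Semiring Q] (iot : Rt p m t →+* P)
    (piQ : P →+* Q) : Q :=
  piQ (iot (uE p m t))

/-- The image in `R^{t,f}_Θ` of the lift of a skew polynomial over `F_{p^m}`. -/
noncomputable def lQ {P Q : Type*} [Semiring P] [Semiring Q] (iot : Rt p m t →+* P) (X : P)
    (piQ : P →+* Q) (c : ℕ →₀ Fq p m) : Q :=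
  piQ (liftP p m t iot X c)

/-- The class in `F_{p^m}[x,θ]/⟨f̄⟩` of the skew polynomial with coefficients `c`. -/
noncomputable def lQf {Pf Qf : Type*} [Semiring Pf] [Semiring Qf] (iotf : Fq p m →+* Pf)
    (Xf : Pf) (pif : Pf →+* Qf) (c : ℕ →₀ Fq p m) : Qf :=
  pif (spoly iotf Xf c)

/-- `b(x)` right-divides `c(x)` in the quotient `F_{p^m}[x,θ]/⟨f̄⟩`. -/
def RDvdC {Pf Qf : Type*} [Semiring Pf] [Semiring Qf] (iotf : Fq p m →+* Pf) (Xf : Pf)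
    (pif : Pf →+* Qf) (b c : ℕ →₀ Fq p m) : Prop :=
  ∃ h : Qf, lQf p m iotf Xf pif c = h * lQf p m iotf Xf pif b

/-- Membership in `B_w`: representative of degree `≤ D - 1` which right-divides `w`. -/
def InB {Pf : Type*} [Semiring Pf] (iotf : Fq p m →+* Pf) (Xf : Pf) (w : Pf) (D : ℕ)
    (c : ℕ →₀ Fq p m) : Prop :=
  (∀ i, D ≤ i → c i = 0) ∧ RDvd (spoly iotf Xf c) w

/-- `deg c < deg d` for coefficient families. -/
def degLt {R : Type*} [Zero R] (c d : ℕ →₀ R) : Prop := c.support.max < d.support.max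

/-- "Type (ii)" left ideals of `R^{t,f}_Θ`: those of the form
`Σⱼ R (u^{(t-1)-i_j} b_{i_j}(x) - u^{(t-1)-(i_j-1)} g_{i_j}(x))` with
`0 ≤ i₁ < ⋯ < i_n ≤ t-2`, `b_{i_j} ∈ B_w` of degree `≤ D - 1`, together with the
right-divisibility side condition. -/
def TypeTwo (p m t : ℕ) [Fact p.Prime] {P Pf Q Qf : Type*} [Ring P] [Ring Pf] [Ring Q] [Ring Qf]
    (iot : Rt p m t →+* P) (Xp : P) (piQ : P →+* Q)
    (iotf : Fq p m →+* Pf) (Xf : Pf) (pif : Pf →+* Qf)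
    (w : Pf) (D : ℕ) (J : Ideal Q) : Prop :=
  ∃ (n : ℕ) (idx : Fin n → ℕ) (bcs : Fin n → (ℕ →₀ Fq p m)) (gs : Fin n → Q),
    StrictMono idx ∧ (∀ j, idx j ≤ t - 2) ∧ (∀ j, InB p m iotf Xf w D (bcs j)) ∧
    J = Submodule.span Q (Set.range fun j : Fin n =>
        uQ p m t iot piQ ^ (t - 1 - idx j) * lQ p m t iot Xp piQ (bcs j)
          - uQ p m t iot piQ ^ (t - idx j) * gs j) ∧
    ∀ (j k : Fin n), j < k → ∀ (cc : ℕ →₀ Fq p m) (g : Q),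
      uQ p m t iot piQ ^ (t - 1 - idx j) * lQ p m t iot Xp piQ cc
          + uQ p m t iot piQ ^ (t - idx j) * g ∈
        Submodule.span Q ((fun l : Fin n =>
          uQ p m t iot piQ ^ (t - 1 - idx l) * lQ p m t iot Xp piQ (bcs l)
            - uQ p m t iot piQ ^ (t - idx l) * gs l) '' {l | k ≤ l}) →
      RDvdC p m iotf Xf pif (bcs j) cc


section AuxStatement15

variable {p m : ℕ} [Fact p.Prime]

lemma rdc_eps' (t : ℕ) (ht : 0 < t) (a : Fq p m) : rdc p m t ht (eps p m t a) = a := by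
  simp [rdc, eps]

lemma Th_uE' (t : ℕ) (theta : Fq p m ≃+* Fq p m) : Th p m t theta (uE p m t) = uE p m t := by
  simp [Th, uE, Ideal.quotientEquiv_mk]

lemma Xpow_comm_u' {t : ℕ} {P : Type*} [Ring P] (theta : Fq p m ≃+* Fq p m)
    (iot : Rt p m t →+* P) (Xp : P)
    (hXiot : ∀ r, Xp * iot r = iot (Th p m t theta r) * Xp) (i : ℕ) :
    Xp ^ i * iot (uE p m t) = iot (uE p m t) * Xp ^ i := by
  induction i with
  | zero => simp
  | succ n ih =>
    rw [pow_succ, mul_assoc, hXiot, Th_uE', ← mul_assoc, ih, mul_assoc]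

lemma u_central_P' {t : ℕ} {P : Type*} [Ring P] (theta : Fq p m ≃+* Fq p m)
    (iot : Rt p m t →+* P) (Xp : P)
    (hXiot : ∀ r, Xp * iot r = iot (Th p m t theta r) * Xp)
    (hPrep : ∀ g : P, ∃! c : ℕ →₀ Rt p m t, g = spoly iot Xp c) (g : P) :
    iot (uE p m t) * g = g * iot (uE p m t) := by
  obtain ⟨c, rfl, -⟩ := hPrep g
  rw [spoly, Finsupp.mul_sum, Finsupp.sum_mul]
  apply Finsupp.sum_congr
  intro i _
  rw [mul_assoc, Xpow_comm_u' theta iot Xp hXiot i, ← mul_assoc, ← mul_assoc,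
    ← map_mul, ← map_mul, mul_comm]

lemma u_central_Q' {t : ℕ} {P Q : Type*} [Ring P] [Ring Q] (theta : Fq p m ≃+* Fq p m)
    (iot : Rt p m t →+* P) (Xp : P)
    (hXiot : ∀ r, Xp * iot r = iot (Th p m t theta r) * Xp)
    (hPrep : ∀ g : P, ∃! c : ℕ →₀ Rt p m t, g = spoly iot Xp c)
    (piQ : P →+* Q) (hpiQ : Function.Surjective piQ) (z : Q) :
    uQ p m t iot piQ * z = z * uQ p m t iot piQ := by
  obtain ⟨g, rfl⟩ := hpiQ z
  rw [uQ, ← map_mul, ← map_mul, u_central_P' theta iot Xp hXiot hPrep]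

lemma u2_mul' (d : Rt p m 3) :
    uE p m 3 ^ 2 * d = uE p m 3 ^ 2 * eps p m 3 (rdc p m 3 (by norm_num) d) := by
  obtain ⟨f, rfl⟩ := Ideal.Quotient.mk_surjective d
  have hr : rdc p m 3 (by norm_num) (Ideal.Quotient.mk _ f) = f.eval 0 := by
    simp [rdc]
  rw [hr]
  show Ideal.Quotient.mk _ X ^ 2 * Ideal.Quotient.mk _ f
      = Ideal.Quotient.mk _ X ^ 2 * ((Ideal.Quotient.mk _).comp C (f.eval 0))
  simp only [RingHom.comp_apply]
  rw [← map_pow, ← map_mul, ← map_mul, Ideal.Quotient.eq, ← mul_sub]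
  have hx : (X : Polynomial (Fq p m)) ∣ (f - C (f.eval 0)) := by
    rw [X_dvd_iff]
    simp [coeff_sub, coeff_C, Polynomial.coeff_zero_eq_eval_zero]
  obtain ⟨g, hg⟩ := hx
  rw [hg, Ideal.mem_span_singleton]
  exact ⟨g, by ring⟩

lemma nu_liftP' {P Pf : Type*} [Ring P] [Ring Pf] (iot : Rt p m 3 →+* P) (Xp : P)
    (iotf : Fq p m →+* Pf) (Xf : Pf) (nu : P →+* Pf)
    (hnu1 : ∀ r, nu (iot r) = iotf (rdc p m 3 (by norm_num) r)) (hnu2 : nu Xp = Xf)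
    (c : ℕ →₀ Fq p m) : nu (liftP p m 3 iot Xp c) = spoly iotf Xf c := by
  rw [liftP, map_finsuppSum, spoly]
  apply Finsupp.sum_congr
  intro i _
  rw [map_mul, map_pow, hnu1, hnu2, rdc_eps']

lemma mu_lQ' {P Pf Q Qf : Type*} [Ring P] [Ring Pf] [Ring Q] [Ring Qf]
    (iot : Rt p m 3 →+* P) (Xp : P) (iotf : Fq p m →+* Pf) (Xf : Pf)
    (piQ : P →+* Q) (pif : Pf →+* Qf) (nu : P →+* Pf)
    (hnu1 : ∀ r, nu (iot r) = iotf (rdc p m 3 (by norm_num) r)) (hnu2 : nu Xp = Xf)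
    (mu : Q →+* Qf) (hmu : ∀ c : P, mu (piQ c) = pif (nu c))
    (c : ℕ →₀ Fq p m) :
    mu (lQ p m 3 iot Xp piQ c) = lQf p m iotf Xf pif c := by
  rw [lQ, hmu, nu_liftP' iot Xp iotf Xf nu hnu1 hnu2, lQf]

lemma rep_u2' {P Pf Q Qf : Type*} [Ring P] [Ring Pf] [Ring Q] [Ring Qf]
    (iot : Rt p m 3 →+* P) (Xp : P)
    (hPrep : ∀ g : P, ∃! c : ℕ →₀ Rt p m 3, g = spoly iot Xp c)
    (iotf : Fq p m →+* Pf) (Xf : Pf)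
    (piQ : P →+* Q) (hpiQ : Function.Surjective piQ) (pif : Pf →+* Qf) (nu : P →+* Pf)
    (hnu1 : ∀ r, nu (iot r) = iotf (rdc p m 3 (by norm_num) r)) (hnu2 : nu Xp = Xf)
    (mu : Q →+* Qf) (hmu : ∀ c : P, mu (piQ c) = pif (nu c)) (z : Q) :
    ∃ cc : ℕ →₀ Fq p m,
      uQ p m 3 iot piQ ^ 2 * z = uQ p m 3 iot piQ ^ 2 * lQ p m 3 iot Xp piQ cc ∧
      mu z = lQf p m iotf Xf pif cc := by
  obtain ⟨g, rfl⟩ := hpiQ z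
  obtain ⟨d, rfl, -⟩ := hPrep g
  refine ⟨d.mapRange (rdc p m 3 (by norm_num)) (map_zero _), ?_, ?_⟩
  · have huQ : uQ p m 3 iot piQ ^ 2 = piQ (iot (uE p m 3 ^ 2)) := by
      rw [uQ, ← map_pow, ← map_pow]
    rw [huQ, lQ, ← map_mul, ← map_mul]
    congr 1
    rw [spoly, liftP, Finsupp.sum_mapRange_index (by simp), Finsupp.mul_sum, Finsupp.mul_sum]
    apply Finsupp.sum_congr
    intro i _
    rw [← mul_assoc, ← mul_assoc, ← map_mul, ← map_mul, ← u2_mul']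
  · rw [hmu, lQf]
    congr 1
    rw [spoly, map_finsuppSum, spoly, Finsupp.sum_mapRange_index (by simp)]
    apply Finsupp.sum_congr
    intro i _
    rw [map_mul, map_pow, hnu1, hnu2]

lemma mu_surj' {P Pf Q Qf : Type*} [Ring P] [Ring Pf] [Ring Q] [Ring Qf]
    (iot : Rt p m 3 →+* P) (Xp : P)
    (iotf : Fq p m →+* Pf) (Xf : Pf)
    (hPfrep : ∀ g : Pf, ∃! c : ℕ →₀ Fq p m, g = spoly iotf Xf c)
    (piQ : P →+* Q) (pif : Pf →+* Qf) (hpif : Function.Surjective pif) (nu : P →+* Pf)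
    (hnu1 : ∀ r, nu (iot r) = iotf (rdc p m 3 (by norm_num) r)) (hnu2 : nu Xp = Xf)
    (mu : Q →+* Qf) (hmu : ∀ c : P, mu (piQ c) = pif (nu c)) :
    Function.Surjective mu := by
  intro y
  obtain ⟨g, rfl⟩ := hpif y
  obtain ⟨c, rfl, -⟩ := hPfrep g
  exact ⟨piQ (liftP p m 3 iot Xp c), by rw [hmu, nu_liftP' iot Xp iotf Xf nu hnu1 hnu2]⟩

end AuxStatement15

/-- For a Type-6 left ideal `C₆` of `R^{3,x^{p^s}-λ}_Θ`,
`Tor₂(C₆) = (F_{p^m}[x,θ]/⟨(λ₀₀x-1)^{p^s}⟩) b₂(x)`. -/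
theorem statement15 (p m s : ℕ) [Fact p.Prime] (hm : 0 < m) (hs : 0 < s)
    (theta : Fq p m ≃+* Fq p m)
    (lc : ℕ → Fq p m) (hl0 : lc 0 ≠ 0)
    (hTlam : Th p m 3 theta (lamOf p m 3 lc) = lamOf p m 3 lc)
    (hord : thOrder p m 3 theta ∣ p ^ s)
    {P : Type*} [Ring P] (iot : Rt p m 3 →+* P) (Xp : P)
    (hXiot : ∀ r, Xp * iot r = iot (Th p m 3 theta r) * Xp)
    (hPrep : ∀ g : P, ∃! c : ℕ →₀ Rt p m 3, g = spoly iot Xp c)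
    {Pf : Type*} [Ring Pf] (iotf : Fq p m →+* Pf) (Xf : Pf)
    (hXiotf : ∀ a, Xf * iotf a = iotf (theta a) * Xf)
    (hPfrep : ∀ g : Pf, ∃! c : ℕ →₀ Fq p m, g = spoly iotf Xf c)
    {Q : Type*} [Ring Q] (piQ : P →+* Q) (hpiQ : Function.Surjective piQ)
    (hkerQ : RingHom.ker piQ = Ideal.span {Xp ^ p ^ s - iot (lamOf p m 3 lc)})
    {Qf : Type*} [Ring Qf] (pif : Pf →+* Qf) (hpif : Function.Surjective pif)
    (hkerf : RingHom.ker pif = Ideal.span {(iotf ((lc 0 ^ p ^ (m - s % m))⁻¹) * Xf - 1) ^ p ^ s})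
    (nu : P →+* Pf) (hnu1 : ∀ r, nu (iot r) = iotf (rdc p m 3 (by norm_num) r)) (hnu2 : nu Xp = Xf)
    (mu : Q →+* Qf) (hmu : ∀ c : P, mu (piQ c) = pif (nu c))
    (bc1 bc2 gc1 gc2 : ℕ →₀ Fq p m)
    (hb1 : InB p m iotf Xf ((iotf ((lc 0 ^ p ^ (m - s % m))⁻¹) * Xf - 1) ^ p ^ s) (p ^ s) bc1) (hb2 : InB p m iotf Xf ((iotf ((lc 0 ^ p ^ (m - s % m))⁻¹) * Xf - 1) ^ p ^ s) (p ^ s) bc2)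
    (hdg1 : degLt gc1 bc1) (hdg2 : degLt gc2 bc2)
    (hside : ∀ cc : ℕ →₀ Fq p m,
      uQ p m 3 iot piQ ^ 2 * lQ p m 3 iot Xp piQ cc ∈ Ideal.span {lQ p m 3 iot Xp piQ bc1 + uQ p m 3 iot piQ * lQ p m 3 iot Xp piQ gc1 + uQ p m 3 iot piQ ^ 2 * lQ p m 3 iot Xp piQ gc2} → RDvdC p m iotf Xf pif bc2 cc) :
    ⇑mu '' {c : Q | c * uQ p m 3 iot piQ ^ 2 ∈
        Ideal.span {lQ p m 3 iot Xp piQ bc1 + uQ p m 3 iot piQ * lQ p m 3 iot Xp piQ gc1 + uQ p m 3 iot piQ ^ 2 * lQ p m 3 iot Xp piQ gc2} ⊔ Ideal.span {uQ p m 3 iot piQ ^ 2 * lQ p m 3 iot Xp piQ bc2}} =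
      {y : Qf | ∃ h : Qf, y = h * lQf p m iotf Xf pif bc2} := by
  have hcen : ∀ z : Q, uQ p m 3 iot piQ * z = z * uQ p m 3 iot piQ :=
    u_central_Q' theta iot Xp hXiot hPrep piQ hpiQ
  have hcen2 : ∀ z : Q, uQ p m 3 iot piQ ^ 2 * z = z * uQ p m 3 iot piQ ^ 2 := by
    intro z
    rw [pow_two, mul_assoc, hcen, ← mul_assoc, hcen, mul_assoc]
  have hmulQ := mu_lQ' iot Xp iotf Xf piQ pif nu hnu1 hnu2 mu hmu
  ext y
  simp only [Set.mem_image, Set.mem_setOf_eq]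
  constructor
  · rintro ⟨c, hc, rfl⟩
    rw [Submodule.mem_sup] at hc
    obtain ⟨a, ha, b, hb, hab⟩ := hc
    obtain ⟨qb, hb⟩ := Submodule.mem_span_singleton.mp hb
    rw [smul_eq_mul] at hb
    set z : Q := c - qb * lQ p m 3 iot Xp piQ bc2 with hzdef
    have hz : uQ p m 3 iot piQ ^ 2 * z = a := by
      rw [hzdef, mul_sub, hcen2 c, ← hab, ← hb]
      rw [← mul_assoc, ← hcen2 qb, mul_assoc]
      abel
    obtain ⟨cc, h1, h2⟩ := rep_u2' iot Xp hPrep iotf Xf piQ hpiQ pif nu hnu1 hnu2 mu hmu z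
    have hmem : uQ p m 3 iot piQ ^ 2 * lQ p m 3 iot Xp piQ cc ∈
        Ideal.span {lQ p m 3 iot Xp piQ bc1 + uQ p m 3 iot piQ * lQ p m 3 iot Xp piQ gc1
          + uQ p m 3 iot piQ ^ 2 * lQ p m 3 iot Xp piQ gc2} := by
      rw [← h1, hz]; exact ha
    obtain ⟨h, hh⟩ := hside cc hmem
    refine ⟨h + mu qb, ?_⟩
    have hc' : c = z + qb * lQ p m 3 iot Xp piQ bc2 := by rw [hzdef]; abel
    rw [hc', map_add, map_mul, h2, hmulQ, hh, add_mul]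
  · rintro ⟨h, rfl⟩
    obtain ⟨q, rfl⟩ := mu_surj' iot Xp iotf Xf hPfrep piQ pif hpif nu hnu1 hnu2 mu hmu h
    refine ⟨q * lQ p m 3 iot Xp piQ bc2, ?_, ?_⟩
    · apply Submodule.mem_sup_right
      refine Submodule.mem_span_singleton.mpr ⟨q, ?_⟩
      rw [smul_eq_mul, hcen2 (lQ p m 3 iot Xp piQ bc2), ← mul_assoc]
    · rw [map_mul, hmulQ]

end SkewPaper
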